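/- arXiv:0802.0383 — 3 statements merged into one kernel-verified Lean document; each statement's English description precedes it below -/
import Mathlib

section
/- Let z_1,…,z_k be distinct complex numbers, w_1,…,w_{k-2} complex numbers distinct from each other and from all z_i. Fix an index i₀ ∈ {1,…,k-2}. Then (∏_{s=1}^{k}(w_{i₀} − z_s) / ∏_{s≠i₀}(w_{i₀} − w_s)) · Σ_{m=1}^{k} ∏_{l=1}^{k-2}(z_m − w_l) / (∏_{l≠m}(z_m − z_l)(w_{i₀} − z_m)²) = −1. -/
/-!
Since `z m - w i₀` divides the numerator `∏ l, (z m - w l)`, each summand is minus the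
partial-fraction term of `∏ l ≠ i₀, (X - w l) / ∏ s, (X - z s)` at `X = w i₀`. This
expansion holds by Lagrange interpolation at the nodes `z`, as the numerator has degree
`k - 1 < k + 2`. The prefactor is the reciprocal of that rational function at `w i₀`.
-/

open Finset Polynomial

namespace Lagrange

variable {F ι κ : Type*} [Field F] [DecidableEq ι] {s : Finset ι} {v : ι → F} {x : F}

theorem sum_eval_div_prod_sub_mul_sub {p : F[X]} (hvs : Set.InjOn v s) (hp : p.degree < #s)
    (hx : ∀ i ∈ s, x ≠ v i) :
    ∑ i ∈ s, p.eval (v i) / ((∏ j ∈ s.erase i, (v i - v j)) * (x - v i)) =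
      p.eval x / ∏ i ∈ s, (x - v i) := by
  have hnodal : ∏ i ∈ s, (x - v i) ≠ 0 := by
    rw [← eval_nodal]
    exact eval_nodal_not_at_node hx
  rw [eq_div_iff hnodal, eq_interpolate hvs hp, eval_interpolate_not_at_node _ hx, eval_nodal,
    mul_comm]
  congr 1
  refine sum_congr rfl fun i _ => ?_
  simp only [nodalWeight, prod_inv_distrib, eval_interpolate_at_node _ hvs ‹i ∈ s›]
  rw [div_eq_mul_inv, mul_inv]
  ring

theorem sum_prod_sub_div_prod_sub_mul_sub {t : Finset κ} (u : κ → F) (hvs : Set.InjOn v s)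
    (hts : #t < #s) (hx : ∀ i ∈ s, x ≠ v i) :
    ∑ i ∈ s, (∏ j ∈ t, (v i - u j)) / ((∏ j ∈ s.erase i, (v i - v j)) * (x - v i)) =
      (∏ j ∈ t, (x - u j)) / ∏ i ∈ s, (x - v i) := by
  simpa only [eval_nodal] using
    sum_eval_div_prod_sub_mul_sub (p := nodal t u) hvs (by rw [degree_nodal]; exact_mod_cast hts) hx

end Lagrange

theorem residue_at_w_equals_neg_one (k : ℕ) (z : Fin (k + 2) → ℂ) (w : Fin k → ℂ)
    (hz : Function.Injective z) (hw : Function.Injective w)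
    (hzw : ∀ i j, z i ≠ w j) (i₀ : Fin k) :
    ((∏ s : Fin (k + 2), (w i₀ - z s)) / (∏ s ∈ Finset.univ.erase i₀, (w i₀ - w s))) *
      ∑ m : Fin (k + 2), (∏ l : Fin k, (z m - w l)) /
        ((∏ l ∈ Finset.univ.erase m, (z m - z l)) * (w i₀ - z m) ^ 2) = -1 := by
  have hwz : ∀ m, w i₀ - z m ≠ 0 := fun m => sub_ne_zero.mpr (hzw m i₀).symm
  have hprod_z : ∏ s, (w i₀ - z s) ≠ 0 := prod_ne_zero_iff.mpr fun s _ => hwz s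
  have hprod_w : ∏ s ∈ univ.erase i₀, (w i₀ - w s) ≠ 0 :=
    prod_ne_zero_iff.mpr fun s hs => sub_ne_zero.mpr (hw.ne (mem_erase.mp hs).1.symm)
  have hterm : ∀ m,
      (∏ l, (z m - w l)) / ((∏ l ∈ univ.erase m, (z m - z l)) * (w i₀ - z m) ^ 2) =
      -((∏ l ∈ univ.erase i₀, (z m - w l)) /
        ((∏ l ∈ univ.erase m, (z m - z l)) * (w i₀ - z m))) := fun m => by
    rw [← mul_prod_erase univ _ (mem_univ i₀), ← neg_sub (w i₀) (z m)]
    field_simp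
  have hcard : #(univ.erase i₀) < #(univ : Finset (Fin (k + 2))) := by
    simp only [card_erase_of_mem (mem_univ _), card_univ, Fintype.card_fin]
    omega
  have hpartial := Lagrange.sum_prod_sub_div_prod_sub_mul_sub (x := w i₀) w hz.injOn hcard
    fun m _ => (hzw m i₀).symm
  rw [sum_congr rfl fun m _ => hterm m, sum_neg_distrib, hpartial]
  field_simp
end

section
/- Let z_1,…,z_N be distinct complex numbers and λ_1,…,λ_N complex numbers. Let μ_1,…,μ_M be distinct complex numbers, each different from every z_i, satisfying the Bethe equations: for each j, −(1/2)Σ_{i=1}^{N} λ_i/(μ_j − z_i) + Σ_{k≠j} 1/(μ_j − μ_k) = 0. Define H_i = −λ_i(Σ_{j=1}^{M} 1/(z_i − μ_j) − (1/2)Σ_{j≠i} λ_j/(z_i − z_j)). Then the function Ψ(z) = ∏_{i=1}^{N}(z − z_i)^{−λ_i/2} · ∏_{j=1}^{M}(z − μ_j) satisfies, on the complement of {z_1,…,z_N, μ_1,…,μ_M}, the equation Ψ''(z) = ( (1/4)Σ_i λ_i(λ_i+2)/(z − z_i)² + Σ_i H_i/(z − z_i) ) Ψ(z). -/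
/-! With poles `p = (z, μ)` and weights `c = (-λ/2, 1)`, `L = ∑ c_k / (x - p_k)`. Partial fractions
give `L' + L² = ∑ (c_k² - c_k) / (x - p_k)² + ∑ r_k / (x - p_k)` with residues
`r_k = 2 c_k ∑_{l ≠ k} c_l / (p_k - p_l)`. At `z_i` these are `λ_i(λ_i+2)/4` and `H_i`; at `μ_j`
the double pole cancels since `c = 1`, and the residue is twice the left side of the `j`-th Bethe
equation. -/

open Finset

theorem div_sub_mul_div_sub {c d p q x : ℂ} (hpq : p ≠ q) (hp : x ≠ p) (hq : x ≠ q) :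
    c / (x - p) * (d / (x - q)) = c * d / ((p - q) * (x - p)) + d * c / ((q - p) * (x - q)) := by
  have := sub_ne_zero.2 hpq
  have := sub_ne_zero.2 hp
  have := sub_ne_zero.2 hq
  field_simp
  ring

section SimplePoles

variable {ι : Type*} [Fintype ι]

theorem Finset.sum_sum_erase_comm {M : Type*} [AddCommMonoid M] [DecidableEq ι] (f : ι → ι → M) :
    ∑ k, ∑ l ∈ univ.erase k, f l k = ∑ k, ∑ l ∈ univ.erase k, f k l :=
  Finset.sum_comm' fun _ _ => by simp [ne_comm]

theorem sq_sum_div_sub [DecidableEq ι] (c p : ι → ℂ) (hp : Function.Injective p) {x : ℂ}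
    (hx : ∀ k, x ≠ p k) :
    (∑ k, c k / (x - p k)) ^ 2 = ∑ k, c k ^ 2 / (x - p k) ^ 2 +
      ∑ k, 2 * c k * (∑ l ∈ univ.erase k, c l / (p k - p l)) / (x - p k) := by
  set g : ι → ι → ℂ := fun k l => c k * c l / ((p k - p l) * (x - p k))
  have hoff : ∀ k, ∀ l ∈ univ.erase k, c k / (x - p k) * (c l / (x - p l)) = g k l + g l k :=
    fun k l hl => div_sub_mul_div_sub (hp.ne (ne_of_mem_erase hl).symm) (hx k) (hx l)
  calc (∑ k, c k / (x - p k)) ^ 2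
      = ∑ k, (c k / (x - p k) * (c k / (x - p k)) + ∑ l ∈ univ.erase k, (g k l + g l k)) := by
        rw [sq, sum_mul_sum]
        refine sum_congr rfl fun k _ => ?_
        rw [← add_sum_erase _ _ (mem_univ k), sum_congr rfl (hoff k)]
    _ = ∑ k, c k ^ 2 / (x - p k) ^ 2 + 2 * ∑ k, ∑ l ∈ univ.erase k, g k l := by
        simp only [sum_add_distrib, Finset.sum_sum_erase_comm g, two_mul]
        congr 1
        exact sum_congr rfl fun k _ => by rw [← sq, div_pow]
    _ = _ := by
        rw [mul_sum]
        congr 1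
        refine sum_congr rfl fun k _ => ?_
        rw [mul_sum, mul_sum, sum_div]
        refine sum_congr rfl fun l _ => ?_
        simp only [g, div_eq_mul_inv, mul_inv]
        ring

theorem hasDerivAt_sum_div_sub (c p : ι → ℂ) {x : ℂ} (hx : ∀ k, x ≠ p k) :
    HasDerivAt (fun y => ∑ k, c k / (y - p k)) (∑ k, -c k / (x - p k) ^ 2) x := by
  refine HasDerivAt.fun_sum fun k _ => ?_
  exact ((hasDerivAt_const x (c k)).fun_div ((hasDerivAt_id' x).sub_const (p k))
    (sub_ne_zero.2 (hx k))).congr_deriv (by ring)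

theorem deriv_add_sq_sum_div_sub [DecidableEq ι] (c p : ι → ℂ) (hp : Function.Injective p)
    {x : ℂ} (hx : ∀ k, x ≠ p k) :
    deriv (fun y => ∑ k, c k / (y - p k)) x + (∑ k, c k / (x - p k)) ^ 2 =
      ∑ k, (c k ^ 2 - c k) / (x - p k) ^ 2 +
      ∑ k, 2 * c k * (∑ l ∈ univ.erase k, c l / (p k - p l)) / (x - p k) := by
  rw [(hasDerivAt_sum_div_sub c p hx).deriv, sq_sum_div_sub c p hp hx, ← add_assoc,
    ← sum_add_distrib]
  congr 2
  ext k
  ring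

end SimplePoles

theorem Fintype.sum_erase_inl {α β M : Type*} [Fintype α] [Fintype β] [DecidableEq α]
    [DecidableEq β] [AddCommGroup M] (f : α ⊕ β → M) (a : α) :
    ∑ l ∈ univ.erase (Sum.inl a), f l = ∑ k ∈ univ.erase a, f (Sum.inl k) + ∑ j, f (Sum.inr j) := by
  rw [sum_erase_eq_sub (mem_univ _), sum_erase_eq_sub (mem_univ _), Fintype.sum_sum_type]
  abel

theorem Fintype.sum_erase_inr {α β M : Type*} [Fintype α] [Fintype β] [DecidableEq α]
    [DecidableEq β] [AddCommGroup M] (f : α ⊕ β → M) (b : β) :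
    ∑ l ∈ univ.erase (Sum.inr b), f l = ∑ i, f (Sum.inl i) + ∑ k ∈ univ.erase b, f (Sum.inr k) := by
  rw [sum_erase_eq_sub (mem_univ _), sum_erase_eq_sub (mem_univ _), Fintype.sum_sum_type]
  abel

/-- Bethe equations imply that the logarithmic derivative
`L = Ψ'/Ψ` of `Ψ(z) = ∏ (z - z_i)^{-λ_i/2} ∏ (z - μ_j)` satisfies
`L' + L² = (1/4)Σ λ_i(λ_i+2)/(z-z_i)² + Σ H_i/(z-z_i)`, i.e. `Ψ'' = (...)Ψ`. -/
theorem bethe_implies_oper (N M : ℕ) (z : Fin N → ℂ) (lam : Fin N → ℂ)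
    (μ : Fin M → ℂ)
    (hz : Function.Injective z) (hμ : Function.Injective μ)
    (hμz : ∀ j i, μ j ≠ z i)
    (hBethe : ∀ j : Fin M,
      -(1 / 2) * (∑ i : Fin N, lam i / (μ j - z i)) +
        ∑ k ∈ Finset.univ.erase j, 1 / (μ j - μ k) = 0)
    (H : Fin N → ℂ)
    (hH : ∀ i : Fin N, H i = -lam i * ((∑ j : Fin M, 1 / (z i - μ j)) -
      (1 / 2) * ∑ j ∈ Finset.univ.erase i, lam j / (z i - z j)))
    (L : ℂ → ℂ)
    (hL : ∀ x : ℂ, L x = -(1 / 2) * (∑ i : Fin N, lam i / (x - z i)) +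
      ∑ j : Fin M, 1 / (x - μ j)) :
    ∀ x : ℂ, (∀ i, x ≠ z i) → (∀ j, x ≠ μ j) →
      deriv L x + (L x) ^ 2 =
        (1 / 4) * (∑ i : Fin N, lam i * (lam i + 2) / (x - z i) ^ 2) +
        ∑ i : Fin N, H i / (x - z i) := by
  intro x hxz hxμ
  set c : Fin N ⊕ Fin M → ℂ := Sum.elim (fun i => -(1 / 2) * lam i) 1
  set p : Fin N ⊕ Fin M → ℂ := Sum.elim z μ
  have hp : Function.Injective p := hz.sumElim hμ fun i j => (hμz j i).symm
  have hx : ∀ l, x ≠ p l := Sum.forall.2 ⟨hxz, hxμ⟩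
  have hLc : L = fun y => ∑ l, c l / (y - p l) := by
    funext y
    rw [hL, Fintype.sum_sum_type]
    simp only [c, p, Sum.elim_inl, Sum.elim_inr, Pi.one_apply, mul_div_assoc, mul_sum]
  have hcoeff_z : ∀ i, c (.inl i) ^ 2 - c (.inl i) = 1 / 4 * (lam i * (lam i + 2)) := by
    intro i; simp only [c, Sum.elim_inl]; ring
  have hcoeff_μ : ∀ j, c (.inr j) ^ 2 - c (.inr j) = 0 := by
    intro j; simp only [c, Sum.elim_inr, Pi.one_apply]; ring
  have hres_z :
      ∀ i, 2 * c (.inl i) * ∑ l ∈ univ.erase (.inl i), c l / (p (.inl i) - p l) = H i := by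
    intro i
    rw [Fintype.sum_erase_inl, hH]
    simp only [c, p, Sum.elim_inl, Sum.elim_inr, Pi.one_apply, mul_div_assoc, ← mul_sum]
    ring
  have hres_μ : ∀ j, ∑ l ∈ univ.erase (.inr j), c l / (p (.inr j) - p l) = 0 := by
    intro j
    rw [Fintype.sum_erase_inr, ← hBethe j]
    simp only [c, p, Sum.elim_inl, Sum.elim_inr, Pi.one_apply, mul_div_assoc, ← mul_sum]
  rw [hLc, deriv_add_sq_sum_div_sub c p hp hx, Fintype.sum_sum_type, Fintype.sum_sum_type]
  simp only [hcoeff_z, hcoeff_μ, hres_z, hres_μ, zero_div, mul_zero, sum_const_zero, add_zero]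
  simp only [mul_div_assoc, ← mul_sum, p, Sum.elim_inl]
end

section
/- Let z_1,…,z_N be distinct complex numbers, λ_1,…,λ_N complex numbers, and μ_1,…,μ_M distinct complex numbers each different from every z_i. Define the meromorphic function L(z) = −(1/2)Σ_{i=1}^{N} λ_i/(z − z_i) + Σ_{j=1}^{M} 1/(z − μ_j). If L'(z) + L(z)² has no pole at any μ_j (i.e. extends holomorphically across each μ_j), then the Bethe equations hold: for every j, −(1/2)Σ_i λ_i/(μ_j − z_i) + Σ_{k≠j} 1/(μ_j − μ_k) = 0. -/
/-!
Near `c = μ_j` write `L = (x - c)⁻¹ + g` with `g` holomorphic at `c`; `g c` is the left-hand side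
of the `j`-th Bethe equation. The double poles cancel:
`L' + L² = 2 g / (x - c) + g' + g²`, so `(x - c) (L' + L²) → 2 g c` as `x → c`.
If `L' + L²` agrees near `c` with a function continuous at `c`, the same product tends to `0`,
hence `g c = 0`.
-/

open Finset Filter Topology

section SimplePole

variable {𝕜 : Type*} [NontriviallyNormedField 𝕜] {g : 𝕜 → 𝕜} {c x : 𝕜}

theorem analyticAt_sum_div_sub {ι : Type*} (s : Finset ι) (a p : ι → 𝕜)
    (hp : ∀ i ∈ s, c ≠ p i) : AnalyticAt 𝕜 (fun x => ∑ i ∈ s, a i / (x - p i)) c := by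
  refine Finset.analyticAt_fun_sum s fun i hi => ?_
  exact analyticAt_const.div (analyticAt_id.sub analyticAt_const) (sub_ne_zero.2 (hp i hi))

theorem sub_mul_deriv_add_sq_inv_sub_add (hx : x ≠ c) (hg : DifferentiableAt 𝕜 g x) :
    (x - c) * (deriv (fun y => (y - c)⁻¹ + g y) x + ((x - c)⁻¹ + g x) ^ 2) =
      2 * g x + (x - c) * (deriv g x + g x ^ 2) := by
  have hxc : x - c ≠ 0 := sub_ne_zero.2 hx
  have hderiv : HasDerivAt (fun y => (y - c)⁻¹ + g y) (-1 / (x - c) ^ 2 + deriv g x) x :=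
    (((hasDerivAt_id x).sub_const c).inv hxc).add hg.hasDerivAt
  rw [hderiv.deriv]
  field_simp
  ring

theorem tendsto_sub_mul_deriv_add_sq_inv_sub_add [CompleteSpace 𝕜] (hg : AnalyticAt 𝕜 g c) :
    Tendsto (fun x => (x - c) * (deriv (fun y => (y - c)⁻¹ + g y) x + ((x - c)⁻¹ + g x) ^ 2))
      (𝓝[≠] c) (𝓝 (2 * g c)) := by
  have hlim : Tendsto (fun x => 2 * g x + (x - c) * (deriv g x + g x ^ 2)) (𝓝 c)
      (𝓝 (2 * g c + (c - c) * (deriv g c + g c ^ 2))) := by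
    have hcont : ContinuousAt (fun x => 2 * g x + (x - c) * (deriv g x + g x ^ 2)) c := by
      have := hg.continuousAt
      have := hg.deriv.continuousAt
      fun_prop
    exact hcont.tendsto
  rw [sub_self, zero_mul, add_zero] at hlim
  refine (hlim.mono_left nhdsWithin_le_nhds).congr' ?_
  filter_upwards [self_mem_nhdsWithin, nhdsWithin_le_nhds hg.eventually_analyticAt]
    with x hx hgx
  exact (sub_mul_deriv_add_sq_inv_sub_add hx hgx.differentiableAt).symm

theorem eq_zero_of_continuousAt_eq_deriv_add_sq_inv_sub_add [CompleteSpace 𝕜] [CharZero 𝕜]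
    {F : 𝕜 → 𝕜}
    (hg : AnalyticAt 𝕜 g c) (hF : ContinuousAt F c)
    (hFeq : ∀ᶠ x in 𝓝[≠] c,
      F x = deriv (fun y => (y - c)⁻¹ + g y) x + ((x - c)⁻¹ + g x) ^ 2) :
    g c = 0 := by
  have hzero : Tendsto (fun x => (x - c) * F x) (𝓝[≠] c) (𝓝 0) := by
    have : Tendsto (fun x => (x - c) * F x) (𝓝 c) (𝓝 ((c - c) * F c)) :=
      ((continuous_sub_right c).continuousAt.mul hF).tendsto
    rw [sub_self, zero_mul] at this
    exact this.mono_left nhdsWithin_le_nhds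
  have hres : Tendsto (fun x => (x - c) * F x) (𝓝[≠] c) (𝓝 (2 * g c)) :=
    (tendsto_sub_mul_deriv_add_sq_inv_sub_add hg).congr'
      (hFeq.mono fun x hx => congrArg ((x - c) * ·) hx.symm)
  simpa using tendsto_nhds_unique hres hzero

end SimplePole

theorem no_pole_implies_bethe_general (N M : ℕ) (z : Fin N → ℂ) (lam : Fin N → ℂ)
    (μ : Fin M → ℂ)
    (hμ : Function.Injective μ)
    (hμz : ∀ j i, μ j ≠ z i)
    (L : ℂ → ℂ)
    (hL : ∀ x : ℂ, L x = -(1 / 2) * (∑ i : Fin N, lam i / (x - z i)) +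
      ∑ j : Fin M, 1 / (x - μ j))
    (hext : ∀ j : Fin M, ∃ F : ℂ → ℂ, DifferentiableAt ℂ F (μ j) ∧
      ∀ᶠ x in nhdsWithin (μ j) {μ j}ᶜ, F x = deriv L x + (L x) ^ 2) :
    ∀ j : Fin M,
      -(1 / 2) * (∑ i : Fin N, lam i / (μ j - z i)) +
        ∑ k ∈ Finset.univ.erase j, 1 / (μ j - μ k) = 0 := by
  intro j
  obtain ⟨F, hF, hFeq⟩ := hext j
  set g : ℂ → ℂ := fun x => -(1 / 2) * (∑ i : Fin N, lam i / (x - z i)) +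
    ∑ k ∈ univ.erase j, 1 / (x - μ k)
  have hLg : L = fun x => (x - μ j)⁻¹ + g x := funext fun x => by
    rw [hL, ← add_sum_erase _ _ (mem_univ j), one_div]
    ring
  have hg : AnalyticAt ℂ g (μ j) :=
    (analyticAt_const.mul (analyticAt_sum_div_sub _ _ _ fun i _ => hμz j i)).add
      (analyticAt_sum_div_sub _ _ _ fun k hk => hμ.ne (ne_of_mem_erase hk).symm)
  rw [hLg] at hFeq
  exact eq_zero_of_continuousAt_eq_deriv_add_sq_inv_sub_add (g := g) hg hF.continuousAt hFeq

/-- If `L' + L²` (with `L` the logarithmic derivative of the Bethe ansatz function)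
extends holomorphically across each auxiliary point `μ_j`, then the Bethe
equations hold. -/
theorem no_pole_implies_bethe (N M : ℕ) (z : Fin N → ℂ) (lam : Fin N → ℂ)
    (μ : Fin M → ℂ)
    (hz : Function.Injective z) (hμ : Function.Injective μ)
    (hμz : ∀ j i, μ j ≠ z i)
    (L : ℂ → ℂ)
    (hL : ∀ x : ℂ, L x = -(1 / 2) * (∑ i : Fin N, lam i / (x - z i)) +
      ∑ j : Fin M, 1 / (x - μ j))
    (hext : ∀ j : Fin M, ∃ F : ℂ → ℂ, DifferentiableAt ℂ F (μ j) ∧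
      ∀ᶠ x in nhdsWithin (μ j) {μ j}ᶜ, F x = deriv L x + (L x) ^ 2) :
    ∀ j : Fin M,
      -(1 / 2) * (∑ i : Fin N, lam i / (μ j - z i)) +
        ∑ k ∈ Finset.univ.erase j, 1 / (μ j - μ k) = 0 :=
  no_pole_implies_bethe_general N M z lam μ hμ hμz L hL hext
end
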